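/- arXiv:2504.08496 — 7 statements merged into one kernel-verified Lean document; each statement's English description precedes it below -/
import Mathlib

section
/- Let A, B, C, D be abelian groups with additive maps i: A → B, h: A → C, f: B → D, g: C → D, i*: B → A, h*: C → A, f*: D → B, g*: D → C satisfying: (1) f∘i = g∘h and i*∘f* = h*∘g*; (2) t := f∘f* − id_D is an automorphism of D; (3) s := g∘g* − id_D is an automorphism of D; (6) h∘h* − g*∘f∘f*∘g − id_C + g*∘g = 0; (7) i∘i* − f*∘g∘g*∘f − id_B + f*∘f = 0. Then t∘s∘t = s∘t∘s as endomorphisms of D. -/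
private lemma aux_rearr {G : Type*} [AddCommGroup G] {x y z w : G}
    (hxy : x - y - z + w = 0) : x = y + z - w := by
  have h0 : x - (y + z - w) = 0 := by rw [← hxy]; abel
  exact sub_eq_zero.mp h0

/-- Decategorified A₂-schober data: abelian groups `A, B, C, D` with additive maps
satisfying the relations (1), (2), (3), (6), (7) imply the braid relation
`t ∘ s ∘ t = s ∘ t ∘ s` for the endomorphisms `t = f∘f* − id` and `s = g∘g* − id` of `D`. -/
theorem stmt_3 {A B C D : Type*}
    [AddCommGroup A] [AddCommGroup B] [AddCommGroup C] [AddCommGroup D]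
    (i : A →+ B) (h : A →+ C) (f : B →+ D) (g : C →+ D)
    (istar : B →+ A) (hstar : C →+ A) (fstar : D →+ B) (gstar : D →+ C)
    (h1 : f.comp i = g.comp h) (h1' : istar.comp fstar = hstar.comp gstar)
    (t : D →+ D) (ht : t = f.comp fstar - AddMonoidHom.id D)
    (htaut : Function.Bijective t)
    (s : D →+ D) (hs : s = g.comp gstar - AddMonoidHom.id D)
    (hsaut : Function.Bijective s)
    (h6 : h.comp hstar - gstar.comp (f.comp (fstar.comp g)) - AddMonoidHom.id C
        + gstar.comp g = 0)
    (h7 : i.comp istar - fstar.comp (g.comp (gstar.comp f)) - AddMonoidHom.id B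
        + fstar.comp f = 0) :
    t.comp (s.comp t) = s.comp (t.comp s) := by
  subst ht hs
  set a : AddMonoid.End D := f.comp fstar with ha
  set b : AddMonoid.End D := g.comp gstar with hb
  -- P = f ∘ (i ∘ i*) ∘ f*  equals  a*b*a + a - a*a  by (7)
  have hP : f.comp ((i.comp istar).comp fstar) = a * b * a + a - a * a := by
    ext x
    have h7x := DFunLike.congr_fun h7 (fstar x)
    simp only [AddMonoidHom.sub_apply, AddMonoidHom.add_apply, AddMonoidHom.comp_apply,
      AddMonoidHom.id_apply, AddMonoidHom.zero_apply] at h7x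
    have hX := aux_rearr h7x
    simp only [AddMonoidHom.comp_apply, AddMonoidHom.sub_apply, AddMonoidHom.add_apply,
      AddMonoid.End.coe_mul, Function.comp_apply, ha, hb, hX, map_add, map_sub]
    rfl
  -- Q = g ∘ (h ∘ h*) ∘ g*  equals  b*a*b + b - b*b  by (6)
  have hQ : g.comp ((h.comp hstar).comp gstar) = b * a * b + b - b * b := by
    ext x
    have h6x := DFunLike.congr_fun h6 (gstar x)
    simp only [AddMonoidHom.sub_apply, AddMonoidHom.add_apply, AddMonoidHom.comp_apply,
      AddMonoidHom.id_apply, AddMonoidHom.zero_apply] at h6x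
    have hX := aux_rearr h6x
    simp only [AddMonoidHom.comp_apply, AddMonoidHom.sub_apply, AddMonoidHom.add_apply,
      AddMonoid.End.coe_mul, Function.comp_apply, ha, hb, hX, map_add, map_sub]
    rfl
  -- P = Q by (1)
  have hK : f.comp ((i.comp istar).comp fstar) = g.comp ((h.comp hstar).comp gstar) := by
    ext x
    have e2 := DFunLike.congr_fun h1' x
    have e1 := DFunLike.congr_fun h1 (hstar (gstar x))
    simp only [AddMonoidHom.comp_apply] at e1 e2 ⊢
    rw [e2, e1]
  have key : a * b * a + a - a * a = b * a * b + b - b * b := by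
    rw [← hP, ← hQ]; exact hK
  show (a - 1) * ((b - 1) * (a - 1)) = (b - 1) * ((a - 1) * (b - 1))
  have expand : (a - 1) * ((b - 1) * (a - 1)) - (b - 1) * ((a - 1) * (b - 1))
      = (a * b * a + a - a * a) - (b * a * b + b - b * b) := by noncomm_ring
  rw [key, sub_self] at expand
  exact sub_eq_zero.mp expand
end

section
/- Let A, B, C, D be abelian groups with maps i, h, f, g, i*, h*, f*, g* as in the decategorified A₂-schober data, satisfying f∘i = g∘h, and set t = f∘f* − id_D, s = g∘g* − id_D, a = h∘i* − g*∘f (a map B → C). Assume additionally i∘i* − f*∘g∘g*∘f − id_B + f*∘f = 0 (relation (7)). Then t∘s∘f = g∘a as maps B → D. -/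
/-- With decategorified A₂-schober data satisfying `f∘i = g∘h` and relation (7),
setting `t = f∘f* − id`, `s = g∘g* − id` and `a = h∘i* − g*∘f : B → C`, one has
`t ∘ s ∘ f = g ∘ a` as maps `B → D`. -/
theorem stmt_4 {A B C D : Type*}
    [AddCommGroup A] [AddCommGroup B] [AddCommGroup C] [AddCommGroup D]
    (i : A →+ B) (h : A →+ C) (f : B →+ D) (g : C →+ D)
    (istar : B →+ A) (hstar : C →+ A) (fstar : D →+ B) (gstar : D →+ C)
    (h1 : f.comp i = g.comp h)
    (t : D →+ D) (ht : t = f.comp fstar - AddMonoidHom.id D)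
    (s : D →+ D) (hs : s = g.comp gstar - AddMonoidHom.id D)
    (a : B →+ C) (ha : a = h.comp istar - gstar.comp f)
    (h7 : i.comp istar - fstar.comp (g.comp (gstar.comp f)) - AddMonoidHom.id B
        + fstar.comp f = 0) :
    t.comp (s.comp f) = g.comp a := by
  ext x
  have e1 := congrArg f (DFunLike.congr_fun h7 x)
  have e2 := DFunLike.congr_fun h1 (istar x)
  simp only [AddMonoidHom.comp_apply, AddMonoidHom.sub_apply, AddMonoidHom.add_apply,
    AddMonoidHom.id_apply, AddMonoidHom.zero_apply, map_sub, map_add, map_zero] at e1 e2 ⊢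
  have e1' : (f (i (istar x)) - f x + f (fstar (f x))) - f (fstar (g (gstar (f x)))) = 0 := by
    rw [← e1]; abel
  have key := (sub_eq_zero.mp e1').symm
  rw [ht, hs, ha]
  simp only [AddMonoidHom.sub_apply, AddMonoidHom.comp_apply, AddMonoidHom.id_apply, map_sub]
  rw [key, e2]
  abel
end

section
/- Let A, B, C, D be abelian groups with decategorified A₂-schober data satisfying relations (1)–(7): f∘i = g∘h and i*∘f* = h*∘g*; t = f∘f* − id invertible; s = g∘g* − id invertible; a = h∘i* − g*∘f invertible from B to C; b = i∘h* − f*∘g invertible from C to B; h∘h* − g*∘f∘f*∘g − id + g*∘g = 0; i∘i* − f*∘g∘g*∘f − id + f*∘f = 0. Then h∘h* = id_C + a∘f*∘s^{-1}∘g and i∘i* = id_B + b∘g*∘t^{-1}∘f. -/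
/-- With the full decategorified A₂-schober relations (1)–(7), the maps `h∘h*` and `i∘i*`
are expressed via the twists: `h∘h* = id_C + a∘f*∘s⁻¹∘g` and `i∘i* = id_B + b∘g*∘t⁻¹∘f`. -/
theorem stmt_5 {A B C D : Type*}
    [AddCommGroup A] [AddCommGroup B] [AddCommGroup C] [AddCommGroup D]
    (i : A →+ B) (h : A →+ C) (f : B →+ D) (g : C →+ D)
    (istar : B →+ A) (hstar : C →+ A) (fstar : D →+ B) (gstar : D →+ C)
    (h1 : f.comp i = g.comp h) (h1' : istar.comp fstar = hstar.comp gstar)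
    (t tinv : D →+ D) (ht : t = f.comp fstar - AddMonoidHom.id D)
    (htinv : tinv.comp t = AddMonoidHom.id D ∧ t.comp tinv = AddMonoidHom.id D)
    (s sinv : D →+ D) (hs : s = g.comp gstar - AddMonoidHom.id D)
    (hsinv : sinv.comp s = AddMonoidHom.id D ∧ s.comp sinv = AddMonoidHom.id D)
    (a : B →+ C) (ha : a = h.comp istar - gstar.comp f) (hainv : Function.Bijective a)
    (b : C →+ B) (hb : b = i.comp hstar - fstar.comp g) (hbinv : Function.Bijective b)
    (h6 : h.comp hstar - gstar.comp (f.comp (fstar.comp g)) - AddMonoidHom.id C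
        + gstar.comp g = 0)
    (h7 : i.comp istar - fstar.comp (g.comp (gstar.comp f)) - AddMonoidHom.id B
        + fstar.comp f = 0) :
    h.comp hstar = AddMonoidHom.id C + a.comp (fstar.comp (sinv.comp g)) ∧
      i.comp istar = AddMonoidHom.id B + b.comp (gstar.comp (tinv.comp f)) := by
  obtain ⟨-, hst⟩ := htinv
  obtain ⟨-, hss⟩ := hsinv
  have H6 : ∀ c : C, h (hstar c) - gstar (f (fstar (g c))) - c + gstar (g c) = 0 := by
    intro c; simpa using DFunLike.congr_fun h6 c
  have H7 : ∀ x : B, i (istar x) - fstar (g (gstar (f x))) - x + fstar (f x) = 0 := by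
    intro x; simpa using DFunLike.congr_fun h7 x
  have H1' : ∀ d : D, istar (fstar d) = hstar (gstar d) := by
    intro d; simpa using DFunLike.congr_fun h1' d
  have Hs : ∀ d : D, s d = g (gstar d) - d := by
    intro d; simpa using DFunLike.congr_fun hs d
  have Ht : ∀ d : D, t d = f (fstar d) - d := by
    intro d; simpa using DFunLike.congr_fun ht d
  have Hss : ∀ d : D, s (sinv d) = d := by
    intro d; simpa using DFunLike.congr_fun hss d
  have Hst : ∀ d : D, t (tinv d) = d := by
    intro d; simpa using DFunLike.congr_fun hst d
  constructor
  · ext c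
    set y := sinv (g c) with hy
    have e2 : g (gstar y) = g c + y := by
      have := Hs y
      rw [Hss] at this
      rw [this]; abel
    have E1 := H6 (gstar y)
    rw [e2, map_add, map_add, map_add, map_add] at E1
    have E2 := H6 c
    have key : h (hstar (gstar y)) - gstar (f (fstar y)) - (h (hstar c) - c)
        = (h (hstar (gstar y)) - (gstar (f (fstar (g c))) + gstar (f (fstar y)))
            - gstar y + (gstar (g c) + gstar y))
          - (h (hstar c) - gstar (f (fstar (g c))) - c + gstar (g c)) := by abel
    rw [E1, E2, sub_zero] at key
    have key' : h (hstar (gstar y)) - gstar (f (fstar y)) = h (hstar c) - c :=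
      sub_eq_zero.mp key
    simp only [AddMonoidHom.add_apply, AddMonoidHom.comp_apply, AddMonoidHom.id_apply, ha,
      AddMonoidHom.sub_apply]
    rw [H1', key']
    abel
  · ext x
    set y := tinv (f x) with hy
    have e2 : f (fstar y) = f x + y := by
      have := Ht y
      rw [Hst] at this
      rw [this]; abel
    have E1 := H7 (fstar y)
    rw [e2, map_add, map_add, map_add, map_add] at E1
    have E2 := H7 x
    have key : i (istar (fstar y)) - fstar (g (gstar y)) - (i (istar x) - x)
        = (i (istar (fstar y)) - (fstar (g (gstar (f x))) + fstar (g (gstar y)))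
            - fstar y + (fstar (f x) + fstar y))
          - (i (istar x) - fstar (g (gstar (f x))) - x + fstar (f x)) := by abel
    rw [E1, E2, sub_zero] at key
    have key' : i (istar (fstar y)) - fstar (g (gstar y)) = i (istar x) - x :=
      sub_eq_zero.mp key
    simp only [AddMonoidHom.add_apply, AddMonoidHom.comp_apply, AddMonoidHom.id_apply, hb,
      AddMonoidHom.sub_apply]
    rw [← H1', key']
    abel
end

section
/- For adjacent simple transpositions s = (i, i+1) and s' = (i+1, i+2) in S_n, the Demazure operators on ℚ[x_1, ..., x_n] satisfy the braid relation D_s ∘ D_{s'} ∘ D_s = D_{s'} ∘ D_s ∘ D_{s'}. -/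
/-!
Multiplying through by the Vandermonde product `(x_i - x_j)(x_j - x_k)(x_i - x_k)` turns both
sides of the braid relation into the alternating sum `∑_w sgn(w) w(p)` over the copy of `S_3`
permuting `x_i, x_j, x_k`; the two sums agree because the swaps themselves satisfy the braid
relation `s t s = t s t`. The right-hand side is handled by the same computation for the reversed
triple `(k, j, i)`, since `D_{ji} = -D_{ij}`.
-/

open MvPolynomial
open Classical

/-- The Demazure operator `D_s(p) = (p − s(p))/(x_i − x_j)` on `ℚ[x_1,...,x_n]`. -/
noncomputable def demazure {n : ℕ} (i j : Fin n) (p : MvPolynomial (Fin n) ℚ) :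
    MvPolynomial (Fin n) ℚ :=
  if h : ∃ q, p - rename (Equiv.swap i j) p = (X i - X j) * q then h.choose else 0

theorem X_sub_X_dvd_sub_rename_swap {R σ : Type*} [CommRing R] [DecidableEq σ] (i j : σ)
    (p : MvPolynomial σ R) : (X i - X j : MvPolynomial σ R) ∣ p - rename (Equiv.swap i j) p := by
  induction p using MvPolynomial.induction_on with
  | C a => simp
  | add p q hp hq =>
    rw [map_add, add_sub_add_comm]
    exact dvd_add hp hq
  | mul_X p m hp =>
    rw [map_mul, rename_X]
    have hX : (X i - X j : MvPolynomial σ R) ∣ X m - X (Equiv.swap i j m) := by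
      rcases eq_or_ne m i with rfl | hmi
      · rw [Equiv.swap_apply_left]
      rcases eq_or_ne m j with rfl | hmj
      · rw [Equiv.swap_apply_right]
        exact ⟨-1, by ring⟩
      · rw [Equiv.swap_apply_of_ne_of_ne hmi hmj, sub_self]
        exact dvd_zero _
    rw [show p * X m - rename (Equiv.swap i j) p * X (Equiv.swap i j m) =
        (p - rename (Equiv.swap i j) p) * X m +
          rename (Equiv.swap i j) p * (X m - X (Equiv.swap i j m)) by ring]
    exact dvd_add (hp.mul_right _) (hX.mul_left _)

theorem X_sub_X_ne_zero {R σ : Type*} [CommRing R] [Nontrivial R] {i j : σ} (h : i ≠ j) :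
    (X i - X j : MvPolynomial σ R) ≠ 0 :=
  sub_ne_zero.mpr fun e => h (X_injective e)

section Demazure

variable {n : ℕ}

theorem X_sub_X_mul_demazure (i j : Fin n) (p : MvPolynomial (Fin n) ℚ) :
    (X i - X j) * demazure i j p = p - rename (Equiv.swap i j) p := by
  have h : ∃ q, p - rename (Equiv.swap i j) p = (X i - X j) * q :=
    X_sub_X_dvd_sub_rename_swap i j p
  rw [demazure, dif_pos h]
  exact h.choose_spec.symm

theorem demazure_eq_of_X_sub_X_mul_eq {i j : Fin n} (hij : i ≠ j)
    {p q : MvPolynomial (Fin n) ℚ} (h : (X i - X j) * q = p - rename (Equiv.swap i j) p) :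
    demazure i j p = q :=
  mul_left_cancel₀ (X_sub_X_ne_zero hij) ((X_sub_X_mul_demazure i j p).trans h.symm)

theorem demazure_neg {i j : Fin n} (hij : i ≠ j) (p : MvPolynomial (Fin n) ℚ) :
    demazure i j (-p) = -demazure i j p :=
  demazure_eq_of_X_sub_X_mul_eq hij <| by
    rw [mul_neg, X_sub_X_mul_demazure, map_neg]; ring

theorem demazure_antisymm {i j : Fin n} (hij : i ≠ j) (p : MvPolynomial (Fin n) ℚ) :
    demazure j i p = -demazure i j p :=
  demazure_eq_of_X_sub_X_mul_eq hij.symm <| by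
    rw [Equiv.swap_comm, ← X_sub_X_mul_demazure]; ring

theorem rename_swap_demazure {i j : Fin n} (hij : i ≠ j) (p : MvPolynomial (Fin n) ℚ) :
    rename (Equiv.swap i j) (demazure i j p) = demazure i j p := by
  apply mul_left_cancel₀ (X_sub_X_ne_zero (R := ℚ) hij)
  have h := congrArg (rename (Equiv.swap i j)) (X_sub_X_mul_demazure i j p)
  simp only [map_mul, map_sub, rename_X, Equiv.swap_apply_left, Equiv.swap_apply_right,
    rename_rename, ← Equiv.Perm.coe_mul, Equiv.swap_mul_self, Equiv.Perm.coe_one,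
    rename_id_apply] at h
  rw [X_sub_X_mul_demazure]
  linear_combination -h

end Demazure

section Braid

variable {n : ℕ} {i j k : Fin n}

theorem rename_swap_braid (hij : i ≠ j) (hjk : j ≠ k) (hik : i ≠ k)
    (p : MvPolynomial (Fin n) ℚ) :
    rename (Equiv.swap i j) (rename (Equiv.swap j k) (rename (Equiv.swap i j) p)) =
      rename (Equiv.swap j k) (rename (Equiv.swap i j) (rename (Equiv.swap j k) p)) := by
  have hperm : Equiv.swap i j * Equiv.swap j k * Equiv.swap i j =
      Equiv.swap j k * Equiv.swap i j * Equiv.swap j k := by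
    rw [Equiv.swap_mul_swap_mul_swap hij hik, Equiv.swap_comm i j, Equiv.swap_comm j k,
      Equiv.swap_mul_swap_mul_swap hjk.symm hik.symm, Equiv.swap_comm]
  simp only [rename_rename, ← Equiv.Perm.coe_mul, ← mul_assoc, hperm]

theorem vandermonde_mul_demazure_braid (hij : i ≠ j) (hjk : j ≠ k) (hik : i ≠ k)
    (p : MvPolynomial (Fin n) ℚ) :
    (X i - X j) * (X j - X k) * (X i - X k) *
        demazure i j (demazure j k (demazure i j p)) =
      p - rename (Equiv.swap i j) p - rename (Equiv.swap j k) p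
        + rename (Equiv.swap i j) (rename (Equiv.swap j k) p)
        + rename (Equiv.swap j k) (rename (Equiv.swap i j) p)
        - rename (Equiv.swap i j) (rename (Equiv.swap j k) (rename (Equiv.swap i j) p)) := by
  set s := Equiv.swap i j
  set t := Equiv.swap j k
  set q := demazure i j p
  set r := demazure j k q
  have hq : rename s q = q := rename_swap_demazure hij p
  have h1 : (X i - X j) * q = p - rename s p := X_sub_X_mul_demazure i j p
  have h2 : (X j - X k) * r = q - rename t q := X_sub_X_mul_demazure j k q
  have h3 : (X i - X j) * demazure i j r = r - rename s r := X_sub_X_mul_demazure i j r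
  have h2s : (X i - X k) * rename s r = q - rename s (rename t q) := by
    simpa only [map_mul, map_sub, rename_X, s, Equiv.swap_apply_right,
      Equiv.swap_apply_of_ne_of_ne hik.symm hjk.symm, hq] using congrArg (rename s) h2
  have h1t : (X i - X k) * rename t q = rename t p - rename t (rename s p) := by
    simpa only [map_mul, map_sub, rename_X, t, Equiv.swap_apply_left,
      Equiv.swap_apply_of_ne_of_ne hij hik] using congrArg (rename t) h1
  have h1st : (X j - X k) * rename s (rename t q) =
      rename s (rename t p) - rename s (rename t (rename s p)) := by
    simpa only [map_mul, map_sub, rename_X, s, Equiv.swap_apply_left,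
      Equiv.swap_apply_of_ne_of_ne hik.symm hjk.symm] using congrArg (rename s) h1t
  -- closes since `(x_i - x_j) + (x_j - x_k) = x_i - x_k`
  linear_combination (X j - X k) * (X i - X k) * h3 + (X i - X k) * h2 - (X j - X k) * h2s
    + h1 - h1t + h1st

end Braid

/-- For adjacent simple transpositions `s = (i, i+1)` and `s' = (i+1, i+2)`, the Demazure
operators satisfy the braid relation `D_s ∘ D_{s'} ∘ D_s = D_{s'} ∘ D_s ∘ D_{s'}`. -/
theorem stmt_9 {n : ℕ} (i j k : Fin n)
    (hij : (i : ℕ) + 1 = (j : ℕ)) (hjk : (j : ℕ) + 1 = (k : ℕ)) :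
    ∀ p : MvPolynomial (Fin n) ℚ,
      demazure i j (demazure j k (demazure i j p)) =
        demazure j k (demazure i j (demazure j k p)) := by
  intro p
  have hij' : i ≠ j := Fin.ne_of_val_ne (by omega)
  have hjk' : j ≠ k := Fin.ne_of_val_ne (by omega)
  have hik' : i ≠ k := Fin.ne_of_val_ne (by omega)
  have hreverse : demazure j k (demazure i j (demazure j k p)) =
      -demazure k j (demazure j i (demazure k j p)) := by
    simp only [demazure_antisymm hjk'.symm, demazure_antisymm hij'.symm, demazure_neg hij'.symm,
      neg_neg]
  apply mul_left_cancel₀ (mul_ne_zero (mul_ne_zero (X_sub_X_ne_zero hij')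
    (X_sub_X_ne_zero hjk')) (X_sub_X_ne_zero hik'))
  calc _ = _ := vandermonde_mul_demazure_braid hij' hjk' hik' p
    _ = (X k - X j) * (X j - X i) * (X k - X i) *
          demazure k j (demazure j i (demazure k j p)) := by
        rw [vandermonde_mul_demazure_braid hjk'.symm hij'.symm hik'.symm,
          Equiv.swap_comm k j, Equiv.swap_comm j i, rename_swap_braid hij' hjk' hik']
        ring
    _ = _ := by rw [hreverse]; ring
end

section
/- For non-adjacent simple transpositions s = (i, i+1) and s' = (j, j+1) with |i − j| ≥ 2, the Demazure operators on ℚ[x_1, ..., x_n] commute: D_s ∘ D_{s'} = D_{s'} ∘ D_s. -/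
open MvPolynomial
open Classical

lemma swap_sub_dvd {n : ℕ} (i j : Fin n) (p : MvPolynomial (Fin n) ℚ) :
    ∃ q, p - rename (Equiv.swap i j) p = (X i - X j) * q := by
  show (X i - X j : MvPolynomial (Fin n) ℚ) ∣ _
  induction p using MvPolynomial.induction_on with
  | C a => simp
  | add p q hp hq =>
      rw [map_add]
      have := dvd_add hp hq
      convert this using 1; ring
  | mul_X p m hp =>
      rw [map_mul, rename_X]
      have key : p * X m - rename (Equiv.swap i j) p * X (Equiv.swap i j m)
          = (p - rename (Equiv.swap i j) p) * X m
            + rename (Equiv.swap i j) p * (X m - X (Equiv.swap i j m)) := by ring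
      rw [key]
      refine dvd_add (hp.mul_right _) (Dvd.dvd.mul_left ?_ _)
      by_cases hmi : m = i
      · subst hmi; rw [Equiv.swap_apply_left]
      · by_cases hmj : m = j
        · subst hmj; rw [Equiv.swap_apply_right]
          exact dvd_sub_comm.mp dvd_rfl
        · rw [Equiv.swap_apply_of_ne_of_ne hmi hmj]; simp

lemma demazure_spec {n : ℕ} (i j : Fin n) (p : MvPolynomial (Fin n) ℚ) :
    (X i - X j) * demazure i j p = p - rename (Equiv.swap i j) p := by
  rw [demazure, dif_pos (swap_sub_dvd i j p)]
  exact (swap_sub_dvd i j p).choose_spec.symm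

/-- For non-adjacent simple transpositions `s = (i, i+1)` and `s' = (k, k+1)` with
`|i − k| ≥ 2`, the Demazure operators commute: `D_s ∘ D_{s'} = D_{s'} ∘ D_s`. -/
theorem stmt_10 {n : ℕ} (i j k l : Fin n)
    (hij : (i : ℕ) + 1 = (j : ℕ)) (hkl : (k : ℕ) + 1 = (l : ℕ))
    (hfar : (i : ℕ) + 2 ≤ (k : ℕ) ∨ (k : ℕ) + 2 ≤ (i : ℕ)) :
    ∀ p : MvPolynomial (Fin n) ℚ,
      demazure i j (demazure k l p) = demazure k l (demazure i j p) := by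
  have hij' : i ≠ j := fun h => by have := congrArg Fin.val h; omega
  have hkl' : k ≠ l := fun h => by have := congrArg Fin.val h; omega
  have hik : i ≠ k := fun h => by have := congrArg Fin.val h; omega
  have hil : i ≠ l := fun h => by have := congrArg Fin.val h; omega
  have hjk : j ≠ k := fun h => by have := congrArg Fin.val h; omega
  have hjl : j ≠ l := fun h => by have := congrArg Fin.val h; omega
  have hdis : (Equiv.swap i j).Disjoint (Equiv.swap k l) := by
    intro x
    by_cases hxi : x = i
    · right; rw [hxi]; exact Equiv.swap_apply_of_ne_of_ne hik hil
    by_cases hxj : x = j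
    · right; rw [hxj]; exact Equiv.swap_apply_of_ne_of_ne hjk hjl
    · left; exact Equiv.swap_apply_of_ne_of_ne hxi hxj
  have hmul : Equiv.swap i j * Equiv.swap k l = Equiv.swap k l * Equiv.swap i j :=
    hdis.commute
  have hcomm : ∀ x, (Equiv.swap i j) ((Equiv.swap k l) x)
      = (Equiv.swap k l) ((Equiv.swap i j) x) := by
    intro x
    rw [← Equiv.Perm.mul_apply, hmul, Equiv.Perm.mul_apply]
  have hst : ∀ q : MvPolynomial (Fin n) ℚ,
      rename (Equiv.swap i j) (rename (Equiv.swap k l) q)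
        = rename (Equiv.swap k l) (rename (Equiv.swap i j) q) := by
    intro q
    rw [rename_rename, rename_rename]
    exact congrFun (congrArg _ (congrArg _ (funext hcomm))) q
  have hsB : rename (Equiv.swap i j) (X k - X l : MvPolynomial (Fin n) ℚ) = X k - X l := by
    rw [map_sub, rename_X, rename_X, Equiv.swap_apply_of_ne_of_ne hik.symm hjk.symm,
      Equiv.swap_apply_of_ne_of_ne hil.symm hjl.symm]
  have htA : rename (Equiv.swap k l) (X i - X j : MvPolynomial (Fin n) ℚ) = X i - X j := by
    rw [map_sub, rename_X, rename_X, Equiv.swap_apply_of_ne_of_ne hik hil,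
      Equiv.swap_apply_of_ne_of_ne hjk hjl]
  have hA : (X i - X j : MvPolynomial (Fin n) ℚ) ≠ 0 :=
    sub_ne_zero.mpr fun h => hij' (MvPolynomial.X_injective h)
  have hB : (X k - X l : MvPolynomial (Fin n) ℚ) ≠ 0 :=
    sub_ne_zero.mpr fun h => hkl' (MvPolynomial.X_injective h)
  intro p
  have e1 : (X k - X l) * ((X i - X j) * demazure i j (demazure k l p))
      = p - rename (Equiv.swap k l) p - rename (Equiv.swap i j) p
        + rename (Equiv.swap i j) (rename (Equiv.swap k l) p) := by
    rw [demazure_spec, mul_sub]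
    have h1 : (X k - X l) * rename (Equiv.swap i j) (demazure k l p)
        = rename (Equiv.swap i j) ((X k - X l) * demazure k l p) := by
      rw [map_mul, hsB]
    rw [h1, demazure_spec, map_sub]
    ring
  have e2 : (X i - X j) * ((X k - X l) * demazure k l (demazure i j p))
      = p - rename (Equiv.swap i j) p - rename (Equiv.swap k l) p
        + rename (Equiv.swap k l) (rename (Equiv.swap i j) p) := by
    rw [demazure_spec, mul_sub]
    have h1 : (X i - X j) * rename (Equiv.swap k l) (demazure i j p)
        = rename (Equiv.swap k l) ((X i - X j) * demazure i j p) := by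
      rw [map_mul, htA]
    rw [h1, demazure_spec, map_sub]
    ring
  have key : (X i - X j) * ((X k - X l) * demazure i j (demazure k l p))
      = (X i - X j) * ((X k - X l) * demazure k l (demazure i j p)) := by
    rw [e2, mul_left_comm, e1, hst]
    ring
  exact mul_left_cancel₀ hB (mul_left_cancel₀ hA key)
end

section
/- Let s = (i, i+1) ∈ S_n act on R = ℚ[x_1, ..., x_n]. Then R is a free module of rank 2 over the invariant ring R^s with basis {1, x_i}, and the Demazure operator D_s: R → R^s is a non-degenerate trace for this Frobenius extension: D_s(1) = 0, D_s(1 · x_i) = 1 and D_s(x_i · x_i) = x_i + x_{i+1}, hence the matrix of the pairing (p, q) ↦ D_s(pq) in the basis {1, x_i} is invertible over R^s. -/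
open MvPolynomial
open Classical

/-- The subalgebra `R^s` of polynomials invariant under the transposition `s = (i, j)`. -/
noncomputable def invariants {n : ℕ} (i j : Fin n) : Subalgebra ℚ (MvPolynomial (Fin n) ℚ) :=
  AlgHom.equalizer
    ((rename (Equiv.swap i j) : MvPolynomial (Fin n) ℚ →ₐ[ℚ] MvPolynomial (Fin n) ℚ))
    (AlgHom.id ℚ (MvPolynomial (Fin n) ℚ))

namespace DemAux

variable {n : ℕ} (i j : Fin n)

lemma swap_invol (p : MvPolynomial (Fin n) ℚ) :
    rename (Equiv.swap i j) (rename (Equiv.swap i j) p) = p := by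
  rw [rename_rename]
  have : (Equiv.swap i j) ∘ (Equiv.swap i j) = id := by
    funext x; simp [Equiv.swap_apply_self]
  rw [this, rename_id, AlgHom.id_apply]

lemma dvd_sub_rename (p : MvPolynomial (Fin n) ℚ) :
    (X i - X j) ∣ (p - rename (Equiv.swap i j) p) := by
  induction p using MvPolynomial.induction_on with
  | C a => simp
  | add p q hp hq =>
    have h : p + q - rename (Equiv.swap i j) (p + q) =
        (p - rename (Equiv.swap i j) p) + (q - rename (Equiv.swap i j) q) := by
      rw [map_add]; ring
    rw [h]; exact dvd_add hp hq
  | mul_X p k hp =>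
    rw [map_mul, rename_X]
    have h : p * X k - rename (Equiv.swap i j) p * X ((Equiv.swap i j) k) =
        (p - rename (Equiv.swap i j) p) * X k +
          rename (Equiv.swap i j) p * (X k - X ((Equiv.swap i j) k)) := by ring
    rw [h]
    refine dvd_add (hp.mul_right _) (Dvd.dvd.mul_left ?_ _)
    rcases eq_or_ne k i with rfl | hki
    · rw [Equiv.swap_apply_left]
    rcases eq_or_ne k j with rfl | hkj
    · rw [Equiv.swap_apply_right, ← neg_sub (X i) (X k)]
      exact dvd_neg.mpr dvd_rfl
    · rw [Equiv.swap_apply_of_ne_of_ne hki hkj]; simp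

lemma Xsub_ne (hij : i ≠ j) : (X i - X j : MvPolynomial (Fin n) ℚ) ≠ 0 :=
  sub_ne_zero.mpr fun he => hij (X_injective he)

lemma demazure_eq (hij : i ≠ j) {p q : MvPolynomial (Fin n) ℚ}
    (h : p - rename (Equiv.swap i j) p = (X i - X j) * q) :
    demazure i j p = q := by
  have hex : ∃ q, p - rename (Equiv.swap i j) p = (X i - X j) * q := ⟨q, h⟩
  rw [demazure, dif_pos hex]
  exact mul_left_cancel₀ (Xsub_ne i j hij) (hex.choose_spec.symm.trans h)

lemma mem_invariants {p : MvPolynomial (Fin n) ℚ} :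
    p ∈ invariants i j ↔ rename (Equiv.swap i j) p = p :=
  AlgHom.mem_equalizer _ _ _

lemma demazure_mem (hij : i ≠ j) (p : MvPolynomial (Fin n) ℚ) :
    demazure i j p ∈ invariants i j := by
  obtain ⟨q, hq⟩ := dvd_sub_rename i j p
  rw [demazure_eq i j hij hq, mem_invariants]
  have h2 := congrArg (rename (Equiv.swap i j)) hq
  rw [map_sub, swap_invol, map_mul, map_sub, rename_X, rename_X,
    Equiv.swap_apply_left, Equiv.swap_apply_right] at h2
  have h3 : p - rename (Equiv.swap i j) p =
      (X i - X j) * rename (Equiv.swap i j) q := by linear_combination -h2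
  exact mul_left_cancel₀ (Xsub_ne i j hij) (h3.symm.trans hq)

lemma demazure_combo (hij : i ≠ j) {a b : MvPolynomial (Fin n) ℚ}
    (ha : a ∈ invariants i j) (hb : b ∈ invariants i j) :
    demazure i j (a + b * X i) = b := by
  rw [mem_invariants] at ha hb
  refine demazure_eq i j hij ?_
  rw [map_add, map_mul, rename_X, Equiv.swap_apply_left, ha, hb]
  ring

end DemAux

open DemAux in
/-- For `s = (i, i+1)`, the ring `R = ℚ[x_1,...,x_n]` is free of rank 2 over `R^s` with
basis `{1, x_i}`; the Demazure operator is a non-degenerate trace for this Frobenius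
extension: `D_s(1) = 0`, `D_s(x_i) = 1`, `D_s(x_i·x_i) = x_i + x_{i+1}`, and the matrix
of the pairing `(p, q) ↦ D_s(pq)` in the basis `{1, x_i}` is invertible over `R^s`. -/
theorem stmt_12 {n : ℕ} (i j : Fin n) (hij : (i : ℕ) + 1 = (j : ℕ)) :
    (∃ b : Module.Basis (Fin 2) (invariants i j) (MvPolynomial (Fin n) ℚ),
      b 0 = 1 ∧ b 1 = X i) ∧
    demazure i j 1 = 0 ∧
    demazure i j (X i) = 1 ∧
    demazure i j (X i * X i) = X i + X j ∧
    (∀ p q : MvPolynomial (Fin n) ℚ, demazure i j (p * q) ∈ invariants i j) ∧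
    (∃ d : invariants i j,
      (d : MvPolynomial (Fin n) ℚ) =
        (Matrix.det !![demazure i j (1 * 1), demazure i j (1 * X i);
            demazure i j (X i * 1), demazure i j (X i * X i)]) ∧
      IsUnit d) := by
  have hne : i ≠ j := by
    intro h; rw [h] at hij; omega
  have hd1 : demazure i j 1 = 0 := by
    refine demazure_eq i j hne ?_; rw [map_one]; ring
  have hdX : demazure i j (X i) = 1 := by
    refine demazure_eq i j hne ?_
    rw [rename_X, Equiv.swap_apply_left]; ring
  have hdXX : demazure i j (X i * X i) = X i + X j := by
    refine demazure_eq i j hne ?_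
    rw [map_mul, rename_X, Equiv.swap_apply_left]; ring
  refine ⟨?_, hd1, hdX, hdXX, fun p q => demazure_mem i j hne _, ?_⟩
  · -- basis
    set v : Fin 2 → MvPolynomial (Fin n) ℚ := ![1, X i] with hv
    have hli : LinearIndependent (invariants i j) v := by
      rw [Fintype.linearIndependent_iff]
      intro g hg
      have hg' : (g 0 : MvPolynomial (Fin n) ℚ) + (g 1 : MvPolynomial (Fin n) ℚ) * X i = 0 := by
        have := hg
        simpa [hv, Fin.sum_univ_two, Subalgebra.smul_def, smul_eq_mul] using this
      have hd0 : demazure i j (0 : MvPolynomial (Fin n) ℚ) = 0 :=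
        demazure_eq i j hne (by simp)
      have h1 : (g 1 : MvPolynomial (Fin n) ℚ) = 0 := by
        have h := demazure_combo i j hne (g 0).2 (g 1).2
        rw [hg', hd0] at h
        exact h.symm
      have h0 : (g 0 : MvPolynomial (Fin n) ℚ) = 0 := by
        rw [h1, zero_mul, add_zero] at hg'
        exact hg'
      intro k
      fin_cases k
      · exact Subtype.ext h0
      · exact Subtype.ext h1
    have hsp : ⊤ ≤ Submodule.span (invariants i j) (Set.range v) := by
      intro p _
      obtain ⟨q, hq⟩ := dvd_sub_rename i j p
      have hqmem : q ∈ invariants i j := by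
        have := demazure_mem i j hne p
        rwa [demazure_eq i j hne hq] at this
      set a : MvPolynomial (Fin n) ℚ := p - q * X i with ha
      have hamem : a ∈ invariants i j := by
        rw [mem_invariants]
        rw [mem_invariants] at hqmem
        have hrp : rename (Equiv.swap i j) p = p - (X i - X j) * q := by
          linear_combination -hq
        rw [ha, map_sub, map_mul, rename_X, Equiv.swap_apply_left, hqmem, hrp]
        ring
      have hp : p = (⟨a, hamem⟩ : invariants i j) • v 0 +
          (⟨q, hqmem⟩ : invariants i j) • v 1 := by
        simp only [hv, Matrix.cons_val_zero, Matrix.cons_val_one, Matrix.head_cons,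
          Subalgebra.smul_def, smul_eq_mul, ha]
        ring
      rw [hp]
      exact Submodule.add_mem _
        (Submodule.smul_mem _ _ (Submodule.subset_span ⟨0, rfl⟩))
        (Submodule.smul_mem _ _ (Submodule.subset_span ⟨1, rfl⟩))
    refine ⟨Module.Basis.mk hli hsp, ?_, ?_⟩
    · rw [Module.Basis.mk_apply]; rfl
    · rw [Module.Basis.mk_apply]; rfl
  · -- determinant
    refine ⟨⟨-1, neg_mem (one_mem _)⟩, ?_, ?_⟩
    · rw [Matrix.det_fin_two_of]
      rw [one_mul, mul_one, one_mul, hd1, hdX, hdXX]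
      ring
    · refine isUnit_iff_exists_inv.mpr ⟨⟨-1, neg_mem (one_mem _)⟩, ?_⟩
      exact Subtype.ext (by push_cast; ring)
end

section
/- Let A, B, C, D be abelian groups satisfying the full list of decategorified A₂-schober relations (1)–(7) of Proposition rem:decata2. Then the automorphisms t and s of D satisfy the braid relation tst = sts, and moreover generate a representation of Br₃ on D given by σ₁ ↦ t, σ₂ ↦ s. -/
/-- The braid relation of the 3-strand braid group `Br₃ = ⟨σ₁, σ₂ | σ₁σ₂σ₁ = σ₂σ₁σ₂⟩`. -/
def braid3Rels : Set (FreeGroup (Fin 2)) :=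
  {FreeGroup.of 0 * FreeGroup.of 1 * FreeGroup.of 0 *
    (FreeGroup.of 1 * FreeGroup.of 0 * FreeGroup.of 1)⁻¹}

/-- The braid group on three strands, as a presented group. -/
def Braid3 : Type := PresentedGroup braid3Rels

noncomputable instance : Group Braid3 := by unfold Braid3; infer_instance

/-- Given full decategorified A₂-schober data (relations (1)–(7)), the automorphisms
`t` and `s` of `D` satisfy the braid relation `tst = sts`, and there is a representation
of `Br₃` on `D` sending `σ₁ ↦ t` and `σ₂ ↦ s`. -/
theorem stmt_18 {A B C D : Type*}
    [AddCommGroup A] [AddCommGroup B] [AddCommGroup C] [AddCommGroup D]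
    (i : A →+ B) (h : A →+ C) (f : B →+ D) (g : C →+ D)
    (istar : B →+ A) (hstar : C →+ A) (fstar : D →+ B) (gstar : D →+ C)
    (h1 : f.comp i = g.comp h) (h1' : istar.comp fstar = hstar.comp gstar)
    (t : D →+ D) (ht : t = f.comp fstar - AddMonoidHom.id D)
    (htaut : Function.Bijective t)
    (s : D →+ D) (hs : s = g.comp gstar - AddMonoidHom.id D)
    (hsaut : Function.Bijective s)
    (a : B →+ C) (ha : a = h.comp istar - gstar.comp f) (hainv : Function.Bijective a)
    (b : C →+ B) (hb : b = i.comp hstar - fstar.comp g) (hbinv : Function.Bijective b)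
    (h6 : h.comp hstar - gstar.comp (f.comp (fstar.comp g)) - AddMonoidHom.id C
        + gstar.comp g = 0)
    (h7 : i.comp istar - fstar.comp (g.comp (gstar.comp f)) - AddMonoidHom.id B
        + fstar.comp f = 0) :
    t.comp (s.comp t) = s.comp (t.comp s) ∧
      ∃ ρ : Braid3 →* Multiplicative (AddAut D),
        (∀ d : D, Multiplicative.toAdd (ρ (PresentedGroup.of (0 : Fin 2))) d = t d) ∧
        (∀ d : D, Multiplicative.toAdd (ρ (PresentedGroup.of (1 : Fin 2))) d = s d) := by
  have p1 : ∀ x, f (i x) = g (h x) := fun x => DFunLike.congr_fun h1 x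
  have p1' : ∀ x, istar (fstar x) = hstar (gstar x) := fun x => DFunLike.congr_fun h1' x
  have p6 : ∀ y, h (hstar y) - gstar (f (fstar (g y))) - y + gstar (g y) = 0 := by
    intro y; simpa using DFunLike.congr_fun h6 y
  have p7 : ∀ x, i (istar x) - fstar (g (gstar (f x))) - x + fstar (f x) = 0 := by
    intro x; simpa using DFunLike.congr_fun h7 x
  have key : ∀ d : D, f (fstar (f (fstar d))) =
      f (fstar d) + f (fstar (g (gstar (f (fstar d))))) -
        g (gstar (f (fstar (g (gstar d))))) - g (gstar d) + g (gstar (g (gstar d))) := by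
    intro d
    have e7 : fstar (f (fstar d)) =
        fstar d + fstar (g (gstar (f (fstar d)))) - i (istar (fstar d)) := by
      rw [← sub_eq_zero, ← p7 (fstar d)]; abel
    have e6 : h (hstar (gstar d)) =
        gstar (f (fstar (g (gstar d)))) + gstar d - gstar (g (gstar d)) := by
      rw [← sub_eq_zero, ← p6 (gstar d)]; abel
    rw [e7, map_sub, map_add, p1' d, p1 (hstar (gstar d)), e6,
      map_sub, map_add]
    abel
  have hptw : ∀ d : D, t (s (t d)) = s (t (s d)) := by
    intro d
    simp only [ht, hs, AddMonoidHom.sub_apply, AddMonoidHom.comp_apply,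
      AddMonoidHom.id_apply, map_sub]
    rw [key d]
    abel
  have hbraid : t.comp (s.comp t) = s.comp (t.comp s) := by
    ext d; simpa using hptw d
  refine ⟨hbraid, ?_⟩
  let T : Multiplicative (AddAut D) := Multiplicative.ofAdd (AddEquiv.ofBijective t htaut)
  let S : Multiplicative (AddAut D) := Multiplicative.ofAdd (AddEquiv.ofBijective s hsaut)
  have hTST : T * S * T = S * T * S := by
    apply Multiplicative.toAdd.injective
    ext d
    have : t (s (t d)) = s (t (s d)) := hptw d
    exact this
  have hrels : ∀ r ∈ braid3Rels, (FreeGroup.lift ![T, S]) r = 1 := by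
    intro r hr
    simp only [braid3Rels, Set.mem_singleton_iff] at hr
    subst hr
    simp only [map_mul, map_inv, FreeGroup.lift_apply_of, Matrix.cons_val_zero, Matrix.cons_val_one,
      Matrix.head_cons]
    rw [hTST, mul_inv_cancel]
  let ρ : Braid3 →* Multiplicative (AddAut D) := PresentedGroup.toGroup hrels
  have h0 : ρ (PresentedGroup.of (0 : Fin 2)) = T := PresentedGroup.toGroup.of hrels
  have h1'' : ρ (PresentedGroup.of (1 : Fin 2)) = S := PresentedGroup.toGroup.of hrels
  refine ⟨ρ, ?_, ?_⟩
  · intro d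
    rw [h0]
    rfl
  · intro d
    rw [h1'']
    rfl
end
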